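/- arXiv:1712.03758 — 5 statements merged into one kernel-verified Lean document; each statement's English description precedes it below -/
import Mathlib

section
/- With N = r q_k + q_{k-1} + s as in the three distance theorem setup, define N_A = N + 1 - q_k, N_B = s + 1, N_C = q_k - s - 1, δ_A = |D_k|, δ_B = |D_{k+1}| + (a_{k+1} - r)|D_k|, δ_C = δ_A + δ_B. Then N_A δ_A + N_B δ_B + N_C δ_C = 1. -/
/-!
Writing `x = |D_k|`, `y = |D_{k+1}|` and using `q_{k+1} = a_{k+1} q_k + q_{k-1}`, the left-hand
side collapses to `q_{k+1} x + q_k y`, so the claim is the classical identity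
`q_{k+1} |D_k| + q_k |D_{k+1}| = 1`. The errors satisfy `D_n = -{β_n} D_{n-1}` with
`D_{-1} = -1`, where `{β_n}` is the fractional part of the complete quotient, so
`(-1)^n D_n > 0`; with the signs removed, the identity becomes the determinant relation
`q_{k+1} p_k - q_k p_{k+1} = (-1)^{k+1}`.
-/

theorem irrational_of_succ_eq_inv_fract {β : ℕ → ℝ} (h0 : Irrational (β 0))
    (hβ : ∀ n, β (n + 1) = (Int.fract (β n))⁻¹) (n : ℕ) : Irrational (β n) := by
  induction n with
  | zero => exact h0
  | succ n ih => rw [hβ n]; exact (ih.sub_intCast _).inv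

theorem Irrational.fract_pos {x : ℝ} (h : Irrational x) : 0 < Int.fract x :=
  Int.fract_pos.2 (h.ne_int _)

theorem eq_neg_fract_mul_of_contFract_rec {a : ℤ → ℤ} {β : ℕ → ℝ} {D : ℤ → ℝ}
    (hβ : ∀ n, β (n + 1) = (Int.fract (β n))⁻¹) (ha : ∀ n : ℕ, a n = ⌊β n⌋)
    (hfract : ∀ n, Int.fract (β n) ≠ 0) (hDm1 : D (-1) = -1) (hD0 : D 0 = Int.fract (β 0))
    (hDrec : ∀ n : ℕ, D (n + 1) = a (n + 1) * D n + D (n - 1)) (n : ℕ) :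
    D n = -Int.fract (β n) * D (n - 1) := by
  induction n with
  | zero => simp [hD0, hDm1]
  | succ n ih =>
    have hprev : D (n - 1) = -β (n + 1) * D n := by
      rw [hβ, ih]
      field_simp [hfract n]
    push_cast
    rw [add_sub_cancel_right, hDrec, hprev, ← Nat.cast_one, ← Nat.cast_add, ha, Int.fract]
    ring

theorem neg_one_pow_mul_pos_of_eq_neg_mul {x : ℤ → ℝ} {c : ℕ → ℝ} (hc : ∀ n, 0 < c n)
    (hxm1 : x (-1) < 0) (hx : ∀ n : ℕ, x n = -c n * x (n - 1)) (n : ℕ) :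
    0 < (-1) ^ n * x n := by
  induction n with
  | zero =>
    rw [pow_zero, one_mul, hx, Nat.cast_zero, zero_sub]
    nlinarith [hc 0]
  | succ n ih =>
    rw [hx, Nat.cast_succ, add_sub_cancel_right, pow_succ]
    nlinarith [hc (n + 1)]

theorem contFract_det_eq_neg_one_pow {R : Type*} [CommRing R] {a p q : ℤ → R}
    (hqm1 : q (-1) = 0) (hq0 : q 0 = 1) (hpm1 : p (-1) = 1)
    (hqrec : ∀ k : ℤ, 0 ≤ k → q (k + 1) = a (k + 1) * q k + q (k - 1))
    (hprec : ∀ k : ℤ, 0 ≤ k → p (k + 1) = a (k + 1) * p k + p (k - 1)) (n : ℕ) :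
    q (n + 1) * p n - q n * p (n + 1) = (-1) ^ (n + 1) := by
  induction n with
  | zero =>
    have hq1 := hqrec 0 le_rfl
    have hp1 := hprec 0 le_rfl
    simp only [zero_add, zero_sub] at hq1 hp1
    rw [Nat.cast_zero, zero_add, hq1, hp1, hqm1, hpm1, hq0]
    ring
  | succ n ih =>
    have hn : (0 : ℤ) ≤ n + 1 := by positivity
    rw [Nat.cast_succ, hqrec _ hn, hprec _ hn, add_sub_cancel_right, pow_succ]
    linear_combination -ih

theorem mul_abs_add_mul_abs_eq_one_of_alternating {α : ℝ} {p q : ℤ → ℤ} {D : ℤ → ℝ} {k : ℕ}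
    (hD : ∀ n, D n = q n * α - p n) (hk : 0 < (-1) ^ k * D k)
    (hk1 : 0 < (-1) ^ (k + 1) * D (k + 1))
    (hdet : q (k + 1) * p k - q k * p (k + 1) = (-1) ^ (k + 1)) :
    q (k + 1) * |D k| + q k * |D (k + 1)| = (1 : ℝ) := by
  have habs {n : ℤ} {m : ℕ} (h : 0 < (-1) ^ m * D n) : |D n| = (-1) ^ m * D n := by
    rw [← abs_of_pos h, abs_mul, abs_neg_one_pow, one_mul]
  have hdet' : (q (k + 1) * p k - q k * p (k + 1) : ℝ) = (-1) ^ (k + 1) := by exact_mod_cast hdet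
  rw [habs hk, habs hk1, hD, hD]
  linear_combination -(-1) ^ k * hdet' + (Even.neg_one_pow ⟨k, rfl⟩ : (-1 : ℝ) ^ (k + k) = 1)

theorem stmt_7_general
    (α : ℝ) (hirr : Irrational α)
    (a p q : ℤ → ℤ) (β : ℕ → ℝ)
    (hβ0 : β 0 = α)
    (hβ : ∀ k : ℕ, β (k + 1) = 1 / (β k - ⌊β k⌋))
    (ha : ∀ k : ℕ, a (k : ℤ) = ⌊β k⌋)
    (hqm : q (-1) = 0) (hq0 : q 0 = 1)
    (hpm : p (-1) = 1) (hp0 : p 0 = a 0)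
    (hqrec : ∀ k : ℤ, 0 ≤ k → q (k + 1) = a (k + 1) * q k + q (k - 1))
    (hprec : ∀ k : ℤ, 0 ≤ k → p (k + 1) = a (k + 1) * p k + p (k - 1))
    (D : ℤ → ℝ) (hD : ∀ k : ℤ, D k = (q k : ℝ) * α - (p k : ℝ))
    (k : ℕ) (r s N : ℤ)
    (hN : N = r * q (k : ℤ) + q ((k : ℤ) - 1) + s) :
    ((N : ℝ) + 1 - (q (k : ℤ) : ℝ)) * |D (k : ℤ)| +
      ((s : ℝ) + 1) * (|D ((k : ℤ) + 1)| + ((a ((k : ℤ) + 1) : ℝ) - (r : ℝ)) * |D (k : ℤ)|) +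
      ((q (k : ℤ) : ℝ) - (s : ℝ) - 1) *
        (|D (k : ℤ)| + (|D ((k : ℤ) + 1)| + ((a ((k : ℤ) + 1) : ℝ) - (r : ℝ)) * |D (k : ℤ)|)) = 1 := by
  have hβ' : ∀ n, β (n + 1) = (Int.fract (β n))⁻¹ := fun n => by rw [hβ, one_div, Int.fract]
  have hfract n : 0 < Int.fract (β n) :=
    (irrational_of_succ_eq_inv_fract (hβ0 ▸ hirr) hβ' n).fract_pos
  have hDm1 : D (-1) = -1 := by rw [hD, hqm, hpm]; norm_num
  have hD0 : D 0 = Int.fract (β 0) := by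
    rw [hD, hq0, hp0, ← Nat.cast_zero, ha, hβ0, Int.fract]; push_cast; ring
  have hDrec (n : ℕ) : D (n + 1) = a (n + 1) * D n + D (n - 1) := by
    rw [hD, hD, hD, hqrec _ n.cast_nonneg, hprec _ n.cast_nonneg]; push_cast; ring
  have hsign := neg_one_pow_mul_pos_of_eq_neg_mul hfract (by rw [hDm1]; norm_num)
    (eq_neg_fract_mul_of_contFract_rec hβ' ha (fun n => (hfract n).ne') hDm1 hD0 hDrec)
  have hkey := mul_abs_add_mul_abs_eq_one_of_alternating hD (hsign k)
    (by exact_mod_cast hsign (k + 1)) (contFract_det_eq_neg_one_pow hqm hq0 hpm hqrec hprec k)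
  have hqk : (q (k + 1) : ℝ) = a (k + 1) * q k + q (k - 1) := by
    exact_mod_cast hqrec _ k.cast_nonneg
  rw [hN]
  push_cast
  linear_combination hkey - |D k| * hqk

/-- With the three distance theorem data, N_A δ_A + N_B δ_B + N_C δ_C = 1, where
N_A = N + 1 - q_k, N_B = s + 1, N_C = q_k - s - 1, δ_A = |D_k|,
δ_B = |D_{k+1}| + (a_{k+1} - r)|D_k|, δ_C = δ_A + δ_B. -/
theorem stmt_7
    (α : ℝ) (hirr : Irrational α)
    (a p q : ℤ → ℤ) (β : ℕ → ℝ)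
    (hβ0 : β 0 = α)
    (hβ : ∀ k : ℕ, β (k + 1) = 1 / (β k - ⌊β k⌋))
    (ha : ∀ k : ℕ, a (k : ℤ) = ⌊β k⌋)
    (hqm : q (-1) = 0) (hq0 : q 0 = 1)
    (hpm : p (-1) = 1) (hp0 : p 0 = a 0)
    (hqrec : ∀ k : ℤ, 0 ≤ k → q (k + 1) = a (k + 1) * q k + q (k - 1))
    (hprec : ∀ k : ℤ, 0 ≤ k → p (k + 1) = a (k + 1) * p k + p (k - 1))
    (D : ℤ → ℝ) (hD : ∀ k : ℤ, D k = (q k : ℝ) * α - (p k : ℝ))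
    (k : ℕ) (r s N : ℤ)
    (hr : 1 ≤ r ∧ r ≤ a ((k : ℤ) + 1)) (hs : 0 ≤ s ∧ s ≤ q (k : ℤ) - 1)
    (hN : N = r * q (k : ℤ) + q ((k : ℤ) - 1) + s) :
    ((N : ℝ) + 1 - (q (k : ℤ) : ℝ)) * |D (k : ℤ)| +
      ((s : ℝ) + 1) * (|D ((k : ℤ) + 1)| + ((a ((k : ℤ) + 1) : ℝ) - (r : ℝ)) * |D (k : ℤ)|) +
      ((q (k : ℤ) : ℝ) - (s : ℝ) - 1) *
        (|D (k : ℤ)| + (|D ((k : ℤ) + 1)| + ((a ((k : ℤ) + 1) : ℝ) - (r : ℝ)) * |D (k : ℤ)|)) = 1 :=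
  stmt_7_general α hirr a p q β hβ0 hβ ha hqm hq0 hpm hp0 hqrec hprec D hD k r s N hN
end

section
/- Let α be irrational, k ≥ 0, and r, s with 1 ≤ r ≤ a_{k+1}, 0 ≤ s ≤ q_k - 1, N = r q_k + q_{k-1} + s. If n is an integer with 0 ≤ n ≤ N such that n + (-1)^k q_k ∉ [0, N] and n + (-1)^{k-1}(q_{k-1} + r q_k) ∉ [0, N], then 0 ≤ n + (-1)^{k-1}(q_{k-1} + (r-1) q_k) ≤ N. -/
/-!
The partial quotients `a (k + 1) = ⌊1 / fract (β k)⌋` are nonnegative, hence so are all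
continuants `q k`. Write `P = q (k - 1)`, `Q = q k` and `N = r Q + P + s`.
For `k` even, `n + Q ∉ [0, N]` forces `n > N - Q ≥ P + (r - 1) Q`, while `n - (P + (r - 1) Q) ≤ n ≤ N`.
For `k` odd, `n - Q ∉ [0, N]` forces `n < Q`, so `n + P + (r - 1) Q < P + r Q ≤ N`.
-/

lemma floor_one_div_sub_floor_nonneg (x : ℝ) : 0 ≤ ⌊1 / (x - ⌊x⌋)⌋ :=
  Int.floor_nonneg.mpr (one_div_nonneg.mpr (Int.fract_nonneg x))

lemma continuant_nonneg (a q : ℤ → ℤ) (ha : ∀ k : ℤ, 0 ≤ k → 0 ≤ a (k + 1))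
    (hqm : 0 ≤ q (-1)) (hq0 : 0 ≤ q 0)
    (hqrec : ∀ k : ℤ, 0 ≤ k → q (k + 1) = a (k + 1) * q k + q (k - 1)) :
    ∀ m : ℕ, 0 ≤ q ((m : ℤ) - 1) ∧ 0 ≤ q m := by
  intro m
  induction m with
  | zero => exact ⟨hqm, hq0⟩
  | succ m ih =>
    have hm : (0 : ℤ) ≤ m := m.cast_nonneg
    push_cast
    rw [add_sub_cancel_right, hqrec m hm]
    exact ⟨ih.2, add_nonneg (mul_nonneg (ha m hm) ih.2) ih.1⟩

lemma add_neg_one_pow_mem_Icc (k : ℕ) (P Q r s N n : ℤ) (hP : 0 ≤ P) (hr : 1 ≤ r)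
    (hs : 0 ≤ s ∧ s ≤ Q - 1) (hN : N = r * Q + P + s) (hn0 : 0 ≤ n) (hnN : n ≤ N)
    (hA : ¬(0 ≤ n + (-1) ^ k * Q ∧ n + (-1) ^ k * Q ≤ N)) :
    0 ≤ n + (-1) ^ (k + 1) * (P + (r - 1) * Q) ∧
      n + (-1) ^ (k + 1) * (P + (r - 1) * Q) ≤ N := by
  have hQ : 0 ≤ (r - 1) * Q := mul_nonneg (by omega) (by omega)
  have hrQ : (r - 1) * Q = r * Q - Q := by ring
  rcases k.even_or_odd with hk | hk <;>
  · rw [hk.neg_one_pow] at hA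
    rw [pow_succ, hk.neg_one_pow]
    omega

theorem stmt_8_general
    (a q : ℤ → ℤ) (β : ℕ → ℝ)
    (hβ : ∀ k : ℕ, β (k + 1) = 1 / (β k - ⌊β k⌋))
    (ha : ∀ k : ℕ, a (k : ℤ) = ⌊β k⌋)
    (hqm : q (-1) = 0) (hq0 : q 0 = 1)
    (hqrec : ∀ k : ℤ, 0 ≤ k → q (k + 1) = a (k + 1) * q k + q (k - 1))
    (k : ℕ) (r s N : ℤ)
    (hr : 1 ≤ r ∧ r ≤ a ((k : ℤ) + 1)) (hs : 0 ≤ s ∧ s ≤ q (k : ℤ) - 1)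
    (hN : N = r * q (k : ℤ) + q ((k : ℤ) - 1) + s) :
    ∀ n : ℤ, 0 ≤ n → n ≤ N →
      ¬(0 ≤ n + (-1) ^ k * q (k : ℤ) ∧ n + (-1) ^ k * q (k : ℤ) ≤ N) →
      ¬(0 ≤ n + (-1) ^ (k + 1) * (q ((k : ℤ) - 1) + r * q (k : ℤ)) ∧
          n + (-1) ^ (k + 1) * (q ((k : ℤ) - 1) + r * q (k : ℤ)) ≤ N) →
      0 ≤ n + (-1) ^ (k + 1) * (q ((k : ℤ) - 1) + (r - 1) * q (k : ℤ)) ∧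
        n + (-1) ^ (k + 1) * (q ((k : ℤ) - 1) + (r - 1) * q (k : ℤ)) ≤ N := by
  intro n hn0 hnN hA _
  have ha_nonneg : ∀ m : ℤ, 0 ≤ m → 0 ≤ a (m + 1) := by
    intro m hm
    lift m to ℕ using hm
    rw [← Nat.cast_succ, ha, hβ]
    exact floor_one_div_sub_floor_nonneg (β m)
  have hP := (continuant_nonneg a q ha_nonneg hqm.ge (by rw [hq0]; norm_num) hqrec k).1
  exact add_neg_one_pow_mem_Icc k _ _ r s N n hP hr.1 hs hN hn0 hnN hA

/-- If 0 ≤ n ≤ N and n lies in neither A nor B (in the three distance theorem setup),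
then 0 ≤ n + (-1)^{k-1}(q_{k-1} + (r-1) q_k) ≤ N. -/
theorem stmt_8
    (α : ℝ) (hirr : Irrational α)
    (a p q : ℤ → ℤ) (β : ℕ → ℝ)
    (hβ0 : β 0 = α)
    (hβ : ∀ k : ℕ, β (k + 1) = 1 / (β k - ⌊β k⌋))
    (ha : ∀ k : ℕ, a (k : ℤ) = ⌊β k⌋)
    (hqm : q (-1) = 0) (hq0 : q 0 = 1)
    (hpm : p (-1) = 1) (hp0 : p 0 = a 0)
    (hqrec : ∀ k : ℤ, 0 ≤ k → q (k + 1) = a (k + 1) * q k + q (k - 1))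
    (hprec : ∀ k : ℤ, 0 ≤ k → p (k + 1) = a (k + 1) * p k + p (k - 1))
    (D : ℤ → ℝ) (hD : ∀ k : ℤ, D k = (q k : ℝ) * α - (p k : ℝ))
    (k : ℕ) (r s N : ℤ)
    (hr : 1 ≤ r ∧ r ≤ a ((k : ℤ) + 1)) (hs : 0 ≤ s ∧ s ≤ q (k : ℤ) - 1)
    (hN : N = r * q (k : ℤ) + q ((k : ℤ) - 1) + s) :
    ∀ n : ℤ, 0 ≤ n → n ≤ N →
      ¬(0 ≤ n + (-1) ^ k * q (k : ℤ) ∧ n + (-1) ^ k * q (k : ℤ) ≤ N) →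
      ¬(0 ≤ n + (-1) ^ (k + 1) * (q ((k : ℤ) - 1) + r * q (k : ℤ)) ∧
          n + (-1) ^ (k + 1) * (q ((k : ℤ) - 1) + r * q (k : ℤ)) ≤ N) →
      0 ≤ n + (-1) ^ (k + 1) * (q ((k : ℤ) - 1) + (r - 1) * q (k : ℤ)) ∧
        n + (-1) ^ (k + 1) * (q ((k : ℤ) - 1) + (r - 1) * q (k : ℤ)) ≤ N :=
  stmt_8_general a q β hβ ha hqm hq0 hqrec k r s N hr hs hN
end

section
/- Let α be irrational, k ≥ 0, 1 ≤ r ≤ a_{k+1}, and δ_B = |D_{k+1}| + (a_{k+1} - r)|D_k|. If 0 < δ_B < 1, then the fractional part of (-1)^{k-1}(q_{k-1} + r q_k) α equals δ_B. -/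
/-!
Write `f_j = fract β_j` for the complete quotients `β_j`, so that `a_j = ⌊β_j⌋` and
`β_{j+1} = 1 / f_j`. Induction on `j` gives `D_{j-1} = -β_{j+1} D_j`, and together with
`D_{j+1} = a_{j+1} D_j + D_{j-1}` this yields `D_{j+1} = -f_{j+1} D_j`. Irrationality makes every
`f_j` positive, hence `|D_j| = (-1)^j D_j`. Expanding `q_i α = D_i + p_i` and eliminating `D_{k-1}`
shows that `(-1)^(k+1) (q_{k-1} + r q_k) α` differs from `|D_{k+1}| + (a_{k+1} - r) |D_k|` by an
integer; the latter lies in `[0, 1)`, so it is the fractional part.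
-/

lemma irrational_of_remainder_recurrence {β : ℕ → ℝ} (h0 : Irrational (β 0))
    (hβ : ∀ k : ℕ, β (k + 1) = 1 / (β k - ⌊β k⌋)) (j : ℕ) : Irrational (β j) := by
  induction j with
  | zero => exact h0
  | succ n ih => rw [hβ n, one_div]; exact (ih.sub_intCast _).inv

lemma neg_one_pow_mul_pos_of_succ_eq_neg_mul {x c : ℕ → ℝ} (h0 : 0 < x 0)
    (hc : ∀ j, 0 < c j) (hx : ∀ j, x (j + 1) = -c j * x j) (j : ℕ) : 0 < (-1) ^ j * x j := by
  induction j with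
  | zero => simpa using h0
  | succ n ih =>
    have : (-1) ^ (n + 1) * x (n + 1) = c n * ((-1) ^ n * x n) := by rw [hx, pow_succ]; ring
    rw [this]
    exact mul_pos (hc n) ih

lemma convergent_error_recurrence {α : ℝ} {a p q : ℤ → ℤ} {D : ℤ → ℝ}
    (hqrec : ∀ k : ℤ, 0 ≤ k → q (k + 1) = a (k + 1) * q k + q (k - 1))
    (hprec : ∀ k : ℤ, 0 ≤ k → p (k + 1) = a (k + 1) * p k + p (k - 1))
    (hD : ∀ k : ℤ, D k = (q k : ℝ) * α - (p k : ℝ)) (k : ℕ) :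
    D (k + 1) = a (k + 1) * D k + D (k - 1) := by
  rw [hD, hD, hD, hqrec k k.cast_nonneg, hprec k k.cast_nonneg]
  push_cast
  ring

section Remainders

variable {a : ℤ → ℤ} {β : ℕ → ℝ} {D : ℤ → ℝ}

lemma succ_eq_neg_fract_mul_of_pred_eq
    (ha : ∀ k : ℕ, a (k : ℤ) = ⌊β k⌋) (hrec : ∀ k : ℕ, D (k + 1) = a (k + 1) * D k + D (k - 1))
    {j : ℕ} (hpred : D (j - 1) = -β (j + 1) * D j) :
    D (j + 1) = -Int.fract (β (j + 1)) * D j := by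
  have haj : (a (j + 1) : ℝ) = ⌊β (j + 1)⌋ := by exact_mod_cast ha (j + 1)
  rw [hrec, hpred, haj, ← Int.self_sub_floor]
  ring

lemma pred_eq_neg_remainder_mul
    (hβ : ∀ k : ℕ, β (k + 1) = 1 / (β k - ⌊β k⌋)) (ha : ∀ k : ℕ, a (k : ℤ) = ⌊β k⌋)
    (hfract : ∀ k, Int.fract (β k) ≠ 0) (hDm : D (-1) = -1) (hD0 : D 0 = Int.fract (β 0))
    (hrec : ∀ k : ℕ, D (k + 1) = a (k + 1) * D k + D (k - 1)) (j : ℕ) :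
    D (j - 1) = -β (j + 1) * D j := by
  induction j with
  | zero =>
    rw [hβ 0, Int.self_sub_floor, Nat.cast_zero, zero_sub, hDm, hD0, one_div, neg_mul,
      inv_mul_cancel₀ (hfract 0)]
  | succ n ih =>
    have hsucc := succ_eq_neg_fract_mul_of_pred_eq ha hrec ih
    push_cast
    rw [add_sub_cancel_right, hsucc, hβ (n + 1), Int.self_sub_floor, one_div, neg_mul, neg_mul, mul_neg,
      neg_neg, inv_mul_cancel_left₀ (hfract (n + 1))]

lemma abs_eq_neg_one_pow_mul
    (hβ : ∀ k : ℕ, β (k + 1) = 1 / (β k - ⌊β k⌋)) (ha : ∀ k : ℕ, a (k : ℤ) = ⌊β k⌋)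
    (hfract : ∀ k, Int.fract (β k) ≠ 0) (hDm : D (-1) = -1) (hD0 : D 0 = Int.fract (β 0))
    (hrec : ∀ k : ℕ, D (k + 1) = a (k + 1) * D k + D (k - 1)) (j : ℕ) :
    |D j| = (-1) ^ j * D j := by
  have hpos : 0 < (-1) ^ j * D j :=
    neg_one_pow_mul_pos_of_succ_eq_neg_mul (x := fun j : ℕ => D j)
      (by simpa [hD0] using (Int.fract_nonneg _).lt_of_ne' (hfract 0))
      (fun k => (Int.fract_nonneg _).lt_of_ne' (hfract (k + 1)))
      (fun k => by
        simpa using succ_eq_neg_fract_mul_of_pred_eq ha hrec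
          (pred_eq_neg_remainder_mul hβ ha hfract hDm hD0 hrec k)) j
  rw [← abs_of_pos hpos, abs_mul, abs_neg_one_pow, one_mul]

end Remainders

theorem stmt_10_general
    (α : ℝ) (hirr : Irrational α)
    (a p q : ℤ → ℤ) (β : ℕ → ℝ)
    (hβ0 : β 0 = α)
    (hβ : ∀ k : ℕ, β (k + 1) = 1 / (β k - ⌊β k⌋))
    (ha : ∀ k : ℕ, a (k : ℤ) = ⌊β k⌋)
    (hqm : q (-1) = 0) (hq0 : q 0 = 1)
    (hpm : p (-1) = 1) (hp0 : p 0 = a 0)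
    (hqrec : ∀ k : ℤ, 0 ≤ k → q (k + 1) = a (k + 1) * q k + q (k - 1))
    (hprec : ∀ k : ℤ, 0 ≤ k → p (k + 1) = a (k + 1) * p k + p (k - 1))
    (D : ℤ → ℝ) (hD : ∀ k : ℤ, D k = (q k : ℝ) * α - (p k : ℝ))
    (k : ℕ) (r : ℤ)
    (hδ : 0 < |D ((k : ℤ) + 1)| + ((a ((k : ℤ) + 1) : ℝ) - (r : ℝ)) * |D (k : ℤ)| ∧
          |D ((k : ℤ) + 1)| + ((a ((k : ℤ) + 1) : ℝ) - (r : ℝ)) * |D (k : ℤ)| < 1) :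
    Int.fract ((-1 : ℝ) ^ (k + 1) * ((q ((k : ℤ) - 1) : ℝ) + (r : ℝ) * (q (k : ℤ) : ℝ)) * α) =
      |D ((k : ℤ) + 1)| + ((a ((k : ℤ) + 1) : ℝ) - (r : ℝ)) * |D (k : ℤ)| := by
  have hfract (j : ℕ) : Int.fract (β j) ≠ 0 :=
    (Int.fract_pos.2 ((irrational_of_remainder_recurrence (hβ0 ▸ hirr) hβ j).ne_int _)).ne'
  have hDm : D (-1) = -1 := by simp [hD, hqm, hpm]
  have hD0 : D 0 = Int.fract (β 0) := by
    rw [hD, hq0, hp0, ← Int.self_sub_floor, hβ0, ← hβ0, ← ha 0]; push_cast; ring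
  have hrec := convergent_error_recurrence hqrec hprec hD
  have habs := abs_eq_neg_one_pow_mul hβ ha hfract hDm hD0 hrec
  have habs_succ : |D (k + 1)| = (-1) ^ (k + 1) * D (k + 1) := by exact_mod_cast habs (k + 1)
  have hint : (-1 : ℝ) ^ (k + 1) * ((q ((k : ℤ) - 1) : ℝ) + r * q k) * α =
      |D (k + 1)| + (a (k + 1) - r) * |D k| +
        (((-1) ^ (k + 1) * (p ((k : ℤ) - 1) + r * p k) : ℤ) : ℝ) := by
    rw [habs_succ, habs k, hrec k, hD (k - 1), hD k]
    push_cast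
    ring
  rw [hint, Int.fract_add_intCast, Int.fract_eq_self]
  exact ⟨hδ.1.le, hδ.2⟩

/-- If 1 ≤ r ≤ a_{k+1} and δ_B = |D_{k+1}| + (a_{k+1} - r)|D_k| satisfies 0 < δ_B < 1,
then the fractional part of (-1)^{k-1}(q_{k-1} + r q_k) α equals δ_B. -/
theorem stmt_10
    (α : ℝ) (hirr : Irrational α)
    (a p q : ℤ → ℤ) (β : ℕ → ℝ)
    (hβ0 : β 0 = α)
    (hβ : ∀ k : ℕ, β (k + 1) = 1 / (β k - ⌊β k⌋))
    (ha : ∀ k : ℕ, a (k : ℤ) = ⌊β k⌋)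
    (hqm : q (-1) = 0) (hq0 : q 0 = 1)
    (hpm : p (-1) = 1) (hp0 : p 0 = a 0)
    (hqrec : ∀ k : ℤ, 0 ≤ k → q (k + 1) = a (k + 1) * q k + q (k - 1))
    (hprec : ∀ k : ℤ, 0 ≤ k → p (k + 1) = a (k + 1) * p k + p (k - 1))
    (D : ℤ → ℝ) (hD : ∀ k : ℤ, D k = (q k : ℝ) * α - (p k : ℝ))
    (k : ℕ) (r : ℤ) (hr : 1 ≤ r ∧ r ≤ a ((k : ℤ) + 1))
    (hδ : 0 < |D ((k : ℤ) + 1)| + ((a ((k : ℤ) + 1) : ℝ) - (r : ℝ)) * |D (k : ℤ)| ∧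
          |D ((k : ℤ) + 1)| + ((a ((k : ℤ) + 1) : ℝ) - (r : ℝ)) * |D (k : ℤ)| < 1) :
    Int.fract ((-1 : ℝ) ^ (k + 1) * ((q ((k : ℤ) - 1) : ℝ) + (r : ℝ) * (q (k : ℤ) : ℝ)) * α) =
      |D ((k : ℤ) + 1)| + ((a ((k : ℤ) + 1) : ℝ) - (r : ℝ)) * |D (k : ℤ)| :=
  stmt_10_general α hirr a p q β hβ0 hβ ha hqm hq0 hpm hp0 hqrec hprec D hD k r hδ
end

section
/- Three Distance Theorem (recursive ordering): With the setup of the three distance theorem, define n_0 = 0 and n_{i+1} = n_i + Δ_i where Δ_i = (-1)^k q_k if n_i ∈ A, Δ_i = (-1)^{k-1}(q_{k-1} + r q_k) if n_i ∈ B, and Δ_i = (-1)^{k-1}(q_{k-1} + (r-1) q_k) if n_i ∈ C. Then all n_i lie in [0, N], (n_1, ..., n_N) is a permutation of (1, ..., N), and 0 < {n_1 α} < {n_2 α} < ... < {n_N α} < 1. -/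
/-!
Put δ = (-1)^k D_k and γ = (-1)^(k+1) (D_{k-1} + r D_k); both are positive because the D_j
alternate in sign and r ≤ a_{k+1}. Modulo 1, adding (-1)^k q_k to n moves {nα} up by δ, adding
(-1)^(k+1) (q_{k-1} + r q_k) moves it up by γ, and the C-step is the sum of these two steps, so
it moves {nα} up by δ + γ. Give every m ∈ [0, N] the length δ, γ or δ + γ of the step taken from
m. Since A and B are disjoint, the sum of these lengths is |B^c| δ + |A^c| γ
= (q_{k-1} + r q_k) δ + q_k γ, and this is 1 by the determinant identity for the convergents.

By induction, {n_i α} is the sum of the lengths of n_0, ..., n_{i-1}. These partial sums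
increase strictly, so the n_j are distinct. For i < N, n_0, ..., n_i therefore miss a point of
[0, N], and their lengths add up to less than 1. Hence no step wraps around modulo 1.
-/

open Finset

section ContinuedFraction

variable {x : ℕ → ℝ}

theorem irrational_of_fract_inv_rec (hx : ∀ j, x (j + 1) = 1 / Int.fract (x j))
    (h₀ : Irrational (x 0)) : ∀ j, Irrational (x j)
  | 0 => h₀
  | j + 1 => by
    rw [hx, one_div]
    exact ((irrational_of_fract_inv_rec hx h₀ j).sub_intCast _).inv

theorem fract_pos_of_fract_inv_rec (hx : ∀ j, x (j + 1) = 1 / Int.fract (x j))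
    (h₀ : Irrational (x 0)) (j : ℕ) : 0 < Int.fract (x j) :=
  Int.fract_pos.2 ((irrational_of_fract_inv_rec hx h₀ j).ne_int _)

theorem one_lt_of_fract_inv_rec (hx : ∀ j, x (j + 1) = 1 / Int.fract (x j))
    (h₀ : Irrational (x 0)) (j : ℕ) : 1 < x (j + 1) := by
  rw [hx, one_div, one_lt_inv₀ (fract_pos_of_fract_inv_rec hx h₀ j)]
  exact Int.fract_lt_one _

theorem one_le_floor_of_fract_inv_rec (hx : ∀ j, x (j + 1) = 1 / Int.fract (x j))
    (h₀ : Irrational (x 0)) (j : ℕ) : 1 ≤ ⌊x (j + 1)⌋ :=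
  Int.le_floor.2 (by exact_mod_cast (one_lt_of_fract_inv_rec hx h₀ j).le)

theorem contFrac_denom_bounds {a q : ℤ → ℤ} (ha : ∀ j : ℕ, 1 ≤ a (j + 1))
    (hq_neg_one : q (-1) = 0) (hq_zero : q 0 = 1)
    (hq : ∀ j : ℕ, q (j + 1) = a (j + 1) * q j + q (j - 1)) :
    ∀ j : ℕ, 0 ≤ q (j - 1) ∧ 1 ≤ q j
  | 0 => by simp [hq_neg_one, hq_zero]
  | j + 1 => by
    obtain ⟨hprev, hcur⟩ := contFrac_denom_bounds ha hq_neg_one hq_zero hq j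
    push_cast
    rw [add_sub_cancel_right, hq]
    exact ⟨by omega, by nlinarith [ha j]⟩

theorem contFrac_det {a p q : ℤ → ℤ} (hp_neg_one : p (-1) = 1) (hq_neg_one : q (-1) = 0)
    (hq_zero : q 0 = 1)
    (hp : ∀ j : ℕ, p (j + 1) = a (j + 1) * p j + p (j - 1))
    (hq : ∀ j : ℕ, q (j + 1) = a (j + 1) * q j + q (j - 1)) :
    ∀ j : ℕ, p j * q (j - 1) - p (j - 1) * q j = (-1) ^ (j + 1)
  | 0 => by simp [hp_neg_one, hq_neg_one, hq_zero]
  | j + 1 => by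
    push_cast
    rw [add_sub_cancel_right, hp, hq, pow_succ]
    linear_combination (-1 : ℤ) * contFrac_det hp_neg_one hq_neg_one hq_zero hp hq j

theorem contFrac_err_rec {α : ℝ} {a p q : ℤ → ℤ} {D : ℤ → ℝ} (hD : ∀ j, D j = q j * α - p j)
    (hp : ∀ j : ℕ, p (j + 1) = a (j + 1) * p j + p (j - 1))
    (hq : ∀ j : ℕ, q (j + 1) = a (j + 1) * q j + q (j - 1)) (j : ℕ) :
    D (j + 1) = a (j + 1) * D j + D (j - 1) := by
  simp only [hD, hp j, hq j]
  push_cast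
  ring

theorem completeQuot_mul_err_eq_neg {a : ℤ → ℤ} {D : ℤ → ℝ}
    (hx : ∀ j, x (j + 1) = 1 / Int.fract (x j)) (h₀ : Irrational (x 0))
    (ha : ∀ j : ℕ, a (j + 1) = ⌊x (j + 1)⌋) (hD_neg_one : D (-1) = -1)
    (hD_zero : D 0 = Int.fract (x 0)) (hD : ∀ j : ℕ, D (j + 1) = a (j + 1) * D j + D (j - 1)) :
    ∀ j : ℕ, x (j + 1) * D j = -D (j - 1)
  | 0 => by
    rw [hx, Nat.cast_zero, hD_zero, zero_sub, hD_neg_one, one_div,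
      inv_mul_cancel₀ (fract_pos_of_fract_inv_rec hx h₀ 0).ne', neg_neg]
  | j + 1 => by
    have ih := completeQuot_mul_err_eq_neg hx h₀ ha hD_neg_one hD_zero hD j
    have hfract := (fract_pos_of_fract_inv_rec hx h₀ (j + 1)).ne'
    push_cast
    rw [add_sub_cancel_right, hD, ha, hx, one_div, inv_mul_eq_div, div_eq_iff hfract, Int.fract]
    linear_combination ih

theorem neg_one_pow_mul_contFrac_err_pos {a : ℤ → ℤ} {D : ℤ → ℝ}
    (hx : ∀ j, x (j + 1) = 1 / Int.fract (x j)) (h₀ : Irrational (x 0))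
    (ha : ∀ j : ℕ, a (j + 1) = ⌊x (j + 1)⌋) (hD_neg_one : D (-1) = -1)
    (hD_zero : D 0 = Int.fract (x 0)) (hD : ∀ j : ℕ, D (j + 1) = a (j + 1) * D j + D (j - 1)) :
    ∀ j : ℕ, 0 < (-1) ^ j * D j
  | 0 => by simpa [hD_zero] using fract_pos_of_fract_inv_rec hx h₀ 0
  | j + 1 => by
    have ih := neg_one_pow_mul_contFrac_err_pos hx h₀ ha hD_neg_one hD_zero hD j
    have hx_pos : 0 < x (j + 2) := one_pos.trans (one_lt_of_fract_inv_rec hx h₀ (j + 1))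
    have hmul := completeQuot_mul_err_eq_neg hx h₀ ha hD_neg_one hD_zero hD (j + 1)
    push_cast at hmul
    rw [add_sub_cancel_right] at hmul
    have hquot : (-1) ^ (j + 1) * D (j + 1) = (-1) ^ j * D j / x (j + 2) := by
      field_simp
      linear_combination (-(-1) ^ j : ℝ) * hmul
    push_cast
    rw [hquot]
    exact div_pos ih hx_pos

theorem neg_one_pow_succ_mul_err_add_pos {a : ℤ → ℤ} {D : ℤ → ℝ} {k : ℕ} {r : ℤ}
    (hk : 0 < (-1) ^ k * D k) (hk_succ : 0 < (-1) ^ (k + 1) * D (k + 1))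
    (hD : D (k + 1) = a (k + 1) * D k + D (k - 1)) (hr : r ≤ a (k + 1)) :
    0 < (-1) ^ (k + 1) * (D (k - 1) + r * D k) := by
  have hsplit : (-1) ^ (k + 1) * (D (k - 1) + r * D k) =
      (-1) ^ (k + 1) * D (k + 1) + (a (k + 1) - r) * ((-1) ^ k * D k) := by
    rw [hD]
    ring
  rw [hsplit]
  exact add_pos_of_pos_of_nonneg hk_succ (mul_nonneg (sub_nonneg.2 (by exact_mod_cast hr)) hk.le)

theorem contFrac_gap_sum {α : ℝ} {p q : ℤ → ℤ} {D : ℤ → ℝ} (hD : ∀ j, D j = q j * α - p j)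
    {k : ℕ} (hdet : p k * q (k - 1) - p (k - 1) * q k = (-1) ^ (k + 1)) (r : ℤ) :
    ((q (k - 1) + r * q k : ℤ) : ℝ) * ((-1) ^ k * D k) +
      (q k : ℝ) * ((-1) ^ (k + 1) * (D (k - 1) + r * D k)) = 1 := by
  have hdetR : ((p k * q (k - 1) - p (k - 1) * q k : ℤ) : ℝ) = (-1) ^ (k + 1) := by
    exact_mod_cast hdet
  have hsq : ((-1 : ℝ) ^ k) * (-1) ^ k = 1 := by
    rw [← pow_add]
    exact Even.neg_one_pow ⟨k, rfl⟩
  rw [hD, hD]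
  push_cast at hdetR ⊢
  linear_combination (-(-1) ^ k : ℝ) * hdetR + hsq

end ContinuedFraction

theorem strictMonoOn_sum_range {f : ℕ → ℝ} {N : ℕ} (hf : ∀ l < N, 0 < f l) :
    StrictMonoOn (fun i => ∑ l ∈ range i, f l) (Set.Iic N) :=
  strictMonoOn_Iic_of_lt_succ fun m hm => by
    simpa [Order.succ_eq_add_one, sum_range_succ] using hf m hm

theorem orbit_mem_and_eq_sum_range {ι : Type*} [DecidableEq ι] {S : Finset ι} {g F : ι → ℝ}
    {x : ℕ → ι}
    (hg : ∀ m ∈ S, 0 < g m) (hS : ∑ m ∈ S, g m = 1) (hx₀ : x 0 ∈ S) (hF₀ : F (x 0) = 0)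
    (hstep : ∀ i, i + 1 < #S → x i ∈ S →
      x (i + 1) ∈ S ∧ F (x (i + 1)) = Int.fract (F (x i) + g (x i))) :
    ∀ i < #S, x i ∈ S ∧ F (x i) = ∑ l ∈ range i, g (x l) := by
  intro i
  induction i using Nat.strong_induction_on with
  | _ i ih =>
  rcases i with _ | i
  · simp [hx₀, hF₀]
  intro hi
  have hmem : ∀ l ≤ i, x l ∈ S := fun l hl => (ih l (by omega) (by omega)).1
  have hsum : ∀ l ≤ i, F (x l) = ∑ l' ∈ range l, g (x l') :=
    fun l hl => (ih l (by omega) (by omega)).2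
  have hinj : Set.InjOn x (range (i + 1)) := by
    intro l hl l' hl' h
    simp only [coe_range, Set.mem_Iio] at hl hl'
    refine (strictMonoOn_sum_range (f := fun l => g (x l)) (N := i)
      fun l hl => hg _ (hmem l hl.le)).injOn (by simpa using Nat.lt_succ_iff.1 hl)
      (by simpa using Nat.lt_succ_iff.1 hl') ?_
    simp only [← hsum l (by omega), ← hsum l' (by omega), h]
  have hlt : ∑ l ∈ range (i + 1), g (x l) < 1 := by
    have himg : (range (i + 1)).image x ⊆ S := by
      simpa [image_subset_iff, Nat.lt_succ_iff] using hmem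
    obtain ⟨w, hwS, hw⟩ := exists_mem_notMem_of_card_lt_card
      (s := (range (i + 1)).image x) (t := S) (by rwa [card_image_of_injOn hinj, card_range])
    rw [← sum_image hinj, ← hS]
    exact sum_lt_sum_of_subset himg hwS hw (hg w hwS) fun m hm _ => (hg m hm).le
  obtain ⟨hmem', hF⟩ := hstep i hi (hmem i le_rfl)
  refine ⟨hmem', ?_⟩
  rw [hF, hsum i le_rfl, ← sum_range_succ, Int.fract_eq_self]
  exact ⟨sum_nonneg fun l hl => (hg _ (hmem l (by simpa [Nat.lt_succ_iff] using hl))).le, hlt⟩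

theorem fract_add_mul_of_eq_intCast_add {α c : ℝ} {w z : ℤ} (h : (w : ℝ) * α = z + c) (x : ℤ) :
    Int.fract (((x + w : ℤ) : ℝ) * α) = Int.fract (Int.fract ((x : ℝ) * α) + c) := by
  have hsplit : ((x + w : ℤ) : ℝ) * α =
      ((⌊(x : ℝ) * α⌋ + z : ℤ) : ℝ) + (Int.fract ((x : ℝ) * α) + c) := by
    rw [Int.fract]
    push_cast
    linear_combination h
  rw [hsplit, Int.fract_intCast_add]

theorem neg_one_pow_mul_opposite_signs {A B : ℤ} (hA : 0 < A) (hB : 0 < B) (k : ℕ) :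
    0 < (-1) ^ k * A ∧ (-1) ^ (k + 1) * B < 0 ∨ (-1) ^ k * A < 0 ∧ 0 < (-1) ^ (k + 1) * B := by
  rcases neg_one_pow_eq_or ℤ k with h | h <;> simp [pow_succ, h, hA, hB]

theorem card_filter_add_notMem_Icc (N : ℕ) {u : ℤ} (hu : u.natAbs ≤ N + 1) :
    #{m ∈ Icc (0 : ℤ) N | ¬(0 ≤ m + u ∧ m + u ≤ N)} = u.natAbs := by
  rcases le_total 0 u with h | h
  · have : {m ∈ Icc (0 : ℤ) N | ¬(0 ≤ m + u ∧ m + u ≤ N)} = Icc (N - u + 1) N := by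
      ext m
      simp only [mem_filter, mem_Icc]
      omega
    rw [this, Int.card_Icc]
    omega
  · have : {m ∈ Icc (0 : ℤ) N | ¬(0 ≤ m + u ∧ m + u ≤ N)} = Icc 0 (-u - 1) := by
      ext m
      simp only [mem_filter, mem_Icc]
      omega
    rw [this, Int.card_Icc]
    omega

section ThreeStep

variable (N : ℕ) (u v : ℤ)

/-- With `u = (-1)^k q_k` and `v = (-1)^(k+1) (q_{k-1} + r q_k)`, the three cases are the
A-, B- and C-steps; the C-step `(-1)^(k+1) (q_{k-1} + (r-1) q_k)` equals `u + v`. -/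
def threeStep (m : ℤ) : ℤ :=
  if 0 ≤ m + u ∧ m + u ≤ N then u else if 0 ≤ m + v ∧ m + v ≤ N then v else u + v

def threeGap (δ γ : ℝ) (m : ℤ) : ℝ :=
  if 0 ≤ m + u ∧ m + u ≤ N then δ else if 0 ≤ m + v ∧ m + v ≤ N then γ else δ + γ

variable {N u v}

theorem not_add_mem_Icc_of_add_mem_Icc (huv : 0 < u ∧ v < 0 ∨ u < 0 ∧ 0 < v)
    (hN : N + 1 ≤ u.natAbs + v.natAbs) {m : ℤ} (hmu : 0 ≤ m + u ∧ m + u ≤ N) :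
    ¬(0 ≤ m + v ∧ m + v ≤ N) := by
  omega

theorem add_threeStep_mem_Icc (huv : 0 < u ∧ v < 0 ∨ u < 0 ∧ 0 < v) (hu : u.natAbs ≤ N + 1)
    (hv : v.natAbs ≤ N + 1) {m : ℤ} (hm : m ∈ Icc (0 : ℤ) N) :
    m + threeStep N u v m ∈ Icc (0 : ℤ) N := by
  unfold threeStep
  split_ifs with hmu hmv
  · exact mem_Icc.2 hmu
  · exact mem_Icc.2 hmv
  · rw [mem_Icc] at hm ⊢
    omega

theorem threeGap_pos {δ γ : ℝ} (hδ : 0 < δ) (hγ : 0 < γ) (m : ℤ) : 0 < threeGap N u v δ γ m := by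
  unfold threeGap
  split_ifs <;> positivity

theorem sum_threeGap (huv : 0 < u ∧ v < 0 ∨ u < 0 ∧ 0 < v) (hu : u.natAbs ≤ N + 1)
    (hv : v.natAbs ≤ N + 1) (hN : N + 1 ≤ u.natAbs + v.natAbs) (δ γ : ℝ) :
    ∑ m ∈ Icc (0 : ℤ) N, threeGap N u v δ γ m = v.natAbs * δ + u.natAbs * γ := by
  have hsplit : ∀ m, threeGap N u v δ γ m =
      (if ¬(0 ≤ m + v ∧ m + v ≤ N) then δ else 0) +
        (if ¬(0 ≤ m + u ∧ m + u ≤ N) then γ else 0) := by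
    intro m
    have := not_add_mem_Icc_of_add_mem_Icc huv hN (m := m)
    unfold threeGap
    split_ifs <;> simp_all
  rw [sum_congr rfl fun m _ => hsplit m, sum_add_distrib, ← sum_filter, ← sum_filter,
    sum_const, sum_const, card_filter_add_notMem_Icc N hu, card_filter_add_notMem_Icc N hv,
    nsmul_eq_mul, nsmul_eq_mul]

theorem fract_add_threeStep {α δ γ : ℝ} (hδ : ∃ z : ℤ, (u : ℝ) * α = z + δ)
    (hγ : ∃ z : ℤ, (v : ℝ) * α = z + γ) (m : ℤ) :
    Int.fract (((m + threeStep N u v m : ℤ) : ℝ) * α) =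
      Int.fract (Int.fract ((m : ℝ) * α) + threeGap N u v δ γ m) := by
  obtain ⟨zu, hzu⟩ := hδ
  obtain ⟨zv, hzv⟩ := hγ
  unfold threeStep threeGap
  split_ifs
  · exact fract_add_mul_of_eq_intCast_add hzu m
  · exact fract_add_mul_of_eq_intCast_add hzv m
  · refine fract_add_mul_of_eq_intCast_add (z := zu + zv) ?_ m
    push_cast
    linear_combination hzu + hzv

theorem threeStep_orbit_mem_and_strictMonoOn_fract (huv : 0 < u ∧ v < 0 ∨ u < 0 ∧ 0 < v)
    (hu : u.natAbs ≤ N + 1) (hv : v.natAbs ≤ N + 1) (hN : N + 1 ≤ u.natAbs + v.natAbs)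
    {α δ γ : ℝ} (hδ : 0 < δ) (hγ : 0 < γ) (hδα : ∃ z : ℤ, (u : ℝ) * α = z + δ)
    (hγα : ∃ z : ℤ, (v : ℝ) * α = z + γ)
    (hsum : v.natAbs * δ + u.natAbs * γ = 1) {n : ℕ → ℤ} (hn₀ : n 0 = 0)
    (hn : ∀ i < N, n (i + 1) = n i + threeStep N u v (n i)) :
    (∀ i ≤ N, n i ∈ Icc (0 : ℤ) N) ∧
      StrictMonoOn (fun i => Int.fract ((n i : ℝ) * α)) (Set.Iic N) := by
  have hcard : #(Icc (0 : ℤ) N) = N + 1 := by simp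
  have horbit := orbit_mem_and_eq_sum_range (S := Icc (0 : ℤ) N)
    (F := fun m : ℤ => Int.fract ((m : ℝ) * α)) (x := n) (fun m _ => threeGap_pos hδ hγ m)
    (by rw [sum_threeGap huv hu hv hN, hsum])
    (by simp [hn₀]) (by simp [hn₀]) fun i hi hmem => by
      rw [hn i (by omega)]
      exact ⟨add_threeStep_mem_Icc huv hu hv hmem, fract_add_threeStep hδα hγα _⟩
  rw [hcard] at horbit
  refine ⟨fun i hi => (horbit i (by omega)).1, ?_⟩
  intro i hi j hj hij
  simp only [(horbit i (by simp at hi; omega)).2, (horbit j (by simp at hj; omega)).2]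
  exact strictMonoOn_sum_range (fun l _ => threeGap_pos hδ hγ _) hi hj hij

end ThreeStep

theorem convergent_orbit_mem_and_strictMonoOn_fract {α : ℝ} {p q : ℤ → ℤ} {D : ℤ → ℝ}
    (hD : ∀ j, D j = q j * α - p j) {N k : ℕ} {r s : ℤ} (hq_prev : 0 ≤ q (k - 1))
    (hq_cur : 1 ≤ q k) (hr : 1 ≤ r) (hs : 0 ≤ s ∧ s ≤ q k - 1)
    (hN : (N : ℤ) = r * q k + q (k - 1) + s)
    (hdet : p k * q (k - 1) - p (k - 1) * q k = (-1) ^ (k + 1)) (hδ : 0 < (-1) ^ k * D k)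
    (hγ : 0 < (-1) ^ (k + 1) * (D (k - 1) + r * D k)) {n : ℕ → ℤ} (hn₀ : n 0 = 0)
    (hn : ∀ i < N, n (i + 1) =
      n i + threeStep N ((-1) ^ k * q k) ((-1) ^ (k + 1) * (q (k - 1) + r * q k)) (n i)) :
    (∀ i ≤ N, n i ∈ Icc (0 : ℤ) N) ∧
      StrictMonoOn (fun i => Int.fract ((n i : ℝ) * α)) (Set.Iic N) := by
  have hrq : q k ≤ r * q k := le_mul_of_one_le_left (by omega) hr
  have hu : (((-1) ^ k * q k).natAbs : ℤ) = q k := by simp [Int.natAbs_mul]; omega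
  have hv : (((-1) ^ (k + 1) * (q (k - 1) + r * q k)).natAbs : ℤ) = q (k - 1) + r * q k := by
    simp [Int.natAbs_mul]; omega
  refine threeStep_orbit_mem_and_strictMonoOn_fract
    (neg_one_pow_mul_opposite_signs (by omega) (by omega) k) (by omega) (by omega) (by omega)
    hδ hγ ⟨(-1) ^ k * p k, by rw [hD]; push_cast; ring⟩
    ⟨(-1) ^ (k + 1) * (p (k - 1) + r * p k), by rw [hD, hD]; push_cast; ring⟩ ?_ hn₀ hn
  rw [Nat.cast_natAbs, Nat.cast_natAbs, ← Int.natCast_natAbs, hv, ← Int.natCast_natAbs, hu]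
  exact contFrac_gap_sum hD hdet r

theorem image_Icc_eq_of_injOn {N : ℕ} {n : ℕ → ℤ} (hn : ∀ i ≤ N, n i ∈ Icc (0 : ℤ) N)
    (hn₀ : n 0 = 0) (hinj : Set.InjOn n (Set.Iic N)) : (Icc 1 N).image n = Icc (1 : ℤ) N := by
  refine eq_of_subset_of_card_le ?_ ?_
  · simp only [image_subset_iff, mem_Icc]
    intro i hi
    have hne : n i ≠ n 0 := fun h => by
      have := hinj (by simp; omega) (by simp) h
      omega
    have := mem_Icc.1 (hn i hi.2)
    omega
  · rw [card_image_of_injOn (hinj.mono fun i hi => by simp at hi ⊢; omega)]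
    simp

theorem stmt_12_general
    (α : ℝ) (hirr : Irrational α)
    (a p q : ℤ → ℤ) (β : ℕ → ℝ)
    (hβ0 : β 0 = α)
    (hβ : ∀ k : ℕ, β (k + 1) = 1 / (β k - ⌊β k⌋))
    (ha : ∀ k : ℕ, a (k : ℤ) = ⌊β k⌋)
    (hqm : q (-1) = 0) (hq0 : q 0 = 1)
    (hpm : p (-1) = 1) (hp0 : p 0 = a 0)
    (hqrec : ∀ k : ℤ, 0 ≤ k → q (k + 1) = a (k + 1) * q k + q (k - 1))
    (hprec : ∀ k : ℤ, 0 ≤ k → p (k + 1) = a (k + 1) * p k + p (k - 1))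
    (D : ℤ → ℝ) (hD : ∀ k : ℤ, D k = (q k : ℝ) * α - (p k : ℝ))
    (N : ℕ) (hN1 : 1 ≤ N) (k : ℕ) (r s : ℤ)
    (hr : 1 ≤ r ∧ r ≤ a ((k : ℤ) + 1)) (hs : 0 ≤ s ∧ s ≤ q (k : ℤ) - 1)
    (hN : (N : ℤ) = r * q (k : ℤ) + q ((k : ℤ) - 1) + s)
    (n : ℕ → ℤ) (hn0 : n 0 = 0)
    (hrec : ∀ i : ℕ, i < N → n (i + 1) = n i +
      (if 0 ≤ n i + (-1) ^ k * q (k : ℤ) ∧ n i + (-1) ^ k * q (k : ℤ) ≤ (N : ℤ) then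
        (-1) ^ k * q (k : ℤ)
      else if 0 ≤ n i + (-1) ^ (k + 1) * (q ((k : ℤ) - 1) + r * q (k : ℤ)) ∧
          n i + (-1) ^ (k + 1) * (q ((k : ℤ) - 1) + r * q (k : ℤ)) ≤ (N : ℤ) then
        (-1) ^ (k + 1) * (q ((k : ℤ) - 1) + r * q (k : ℤ))
      else (-1) ^ (k + 1) * (q ((k : ℤ) - 1) + (r - 1) * q (k : ℤ)))) :
    (∀ i : ℕ, i ≤ N → 0 ≤ n i ∧ n i ≤ (N : ℤ)) ∧
      (Finset.Icc 1 N).image n = Finset.Icc (1 : ℤ) (N : ℤ) ∧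
      0 < Int.fract ((n 1 : ℝ) * α) ∧
      (∀ i : ℕ, 1 ≤ i → i < N → Int.fract ((n i : ℝ) * α) < Int.fract ((n (i + 1) : ℝ) * α)) ∧
      Int.fract ((n N : ℝ) * α) < 1 := by
  have hβ' : ∀ j, β (j + 1) = 1 / Int.fract (β j) := hβ
  have hirr' : Irrational (β 0) := hβ0 ▸ hirr
  have ha' : ∀ j : ℕ, a (j + 1) = ⌊β (j + 1)⌋ := fun j => by exact_mod_cast ha (j + 1)
  have hqrec' : ∀ j : ℕ, q (j + 1) = a (j + 1) * q j + q (j - 1) := fun j => hqrec j j.cast_nonneg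
  have hprec' : ∀ j : ℕ, p (j + 1) = a (j + 1) * p j + p (j - 1) := fun j => hprec j j.cast_nonneg
  have hDrec := contFrac_err_rec hD hprec' hqrec'
  have hD0 : D 0 = Int.fract (β 0) := by
    rw [hD, hq0, hp0, show a 0 = ⌊β 0⌋ from ha 0, Int.fract, hβ0]
    push_cast
    ring
  have hsign := neg_one_pow_mul_contFrac_err_pos hβ' hirr' ha' (by simp [hD, hqm, hpm]) hD0 hDrec
  obtain ⟨hq_prev, hq_cur⟩ := contFrac_denom_bounds
    (fun j => ha' j ▸ one_le_floor_of_fract_inv_rec hβ' hirr' j) hqm hq0 hqrec' k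
  obtain ⟨hmem, hmono⟩ := convergent_orbit_mem_and_strictMonoOn_fract hD hq_prev hq_cur hr.1 hs hN
    (contFrac_det hpm hqm hq0 hprec' hqrec' k) (hsign k)
    (neg_one_pow_succ_mul_err_add_pos (hsign k) (by exact_mod_cast hsign (k + 1)) (hDrec k) hr.2)
    hn0 fun i hi => by rw [hrec i hi, threeStep]; split_ifs <;> ring
  have hfract₀ : Int.fract ((n 0 : ℝ) * α) = 0 := by simp [hn0]
  refine ⟨fun i hi => mem_Icc.1 (hmem i hi), image_Icc_eq_of_injOn hmem hn0
    (hmono.injOn.of_comp (g := fun m : ℤ => Int.fract ((m : ℝ) * α))),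
    hfract₀ ▸ hmono (by simp) (by simpa using hN1) one_pos,
    fun i _ hi => hmono (by simp; omega) (by simp; omega) (lt_add_one i), Int.fract_lt_one _⟩

/-- Three distance theorem (recursive ordering): with n_0 = 0 and
n_{i+1} = n_i + Δ_i, where Δ_i is (-1)^k q_k, (-1)^{k-1}(q_{k-1}+r q_k) or
(-1)^{k-1}(q_{k-1}+(r-1)q_k) according to whether n_i belongs to A, B or C,
all n_i lie in [0, N], (n_1, ..., n_N) is a permutation of (1, ..., N), and
0 < {n_1 α} < {n_2 α} < ... < {n_N α} < 1. -/
theorem stmt_12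
    (α : ℝ) (hirr : Irrational α)
    (a p q : ℤ → ℤ) (β : ℕ → ℝ)
    (hβ0 : β 0 = α)
    (hβ : ∀ k : ℕ, β (k + 1) = 1 / (β k - ⌊β k⌋))
    (ha : ∀ k : ℕ, a (k : ℤ) = ⌊β k⌋)
    (hqm : q (-1) = 0) (hq0 : q 0 = 1)
    (hpm : p (-1) = 1) (hp0 : p 0 = a 0)
    (hqrec : ∀ k : ℤ, 0 ≤ k → q (k + 1) = a (k + 1) * q k + q (k - 1))
    (hprec : ∀ k : ℤ, 0 ≤ k → p (k + 1) = a (k + 1) * p k + p (k - 1))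
    (D : ℤ → ℝ) (hD : ∀ k : ℤ, D k = (q k : ℝ) * α - (p k : ℝ))
    (N : ℕ) (hN1 : 1 ≤ N) (k : ℕ) (r s : ℤ)
    (hk : q (k : ℤ) + q ((k : ℤ) - 1) ≤ (N : ℤ) ∧ (N : ℤ) < q ((k : ℤ) + 1) + q (k : ℤ))
    (hr : 1 ≤ r ∧ r ≤ a ((k : ℤ) + 1)) (hs : 0 ≤ s ∧ s ≤ q (k : ℤ) - 1)
    (hN : (N : ℤ) = r * q (k : ℤ) + q ((k : ℤ) - 1) + s)
    (n : ℕ → ℤ) (hn0 : n 0 = 0)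
    (hrec : ∀ i : ℕ, i < N → n (i + 1) = n i +
      (if 0 ≤ n i + (-1) ^ k * q (k : ℤ) ∧ n i + (-1) ^ k * q (k : ℤ) ≤ (N : ℤ) then
        (-1) ^ k * q (k : ℤ)
      else if 0 ≤ n i + (-1) ^ (k + 1) * (q ((k : ℤ) - 1) + r * q (k : ℤ)) ∧
          n i + (-1) ^ (k + 1) * (q ((k : ℤ) - 1) + r * q (k : ℤ)) ≤ (N : ℤ) then
        (-1) ^ (k + 1) * (q ((k : ℤ) - 1) + r * q (k : ℤ))
      else (-1) ^ (k + 1) * (q ((k : ℤ) - 1) + (r - 1) * q (k : ℤ)))) :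
    (∀ i : ℕ, i ≤ N → 0 ≤ n i ∧ n i ≤ (N : ℤ)) ∧
      (Finset.Icc 1 N).image n = Finset.Icc (1 : ℤ) (N : ℤ) ∧
      0 < Int.fract ((n 1 : ℝ) * α) ∧
      (∀ i : ℕ, 1 ≤ i → i < N → Int.fract ((n i : ℝ) * α) < Int.fract ((n (i + 1) : ℝ) * α)) ∧
      Int.fract ((n N : ℝ) * α) < 1 :=
  stmt_12_general α hirr a p q β hβ0 hβ ha hqm hq0 hpm hp0 hqrec hprec D hD N hN1 k r s hr hs hN n
    hn0 hrec
end

section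
/- Main theorem: Let N ∈ ℕ, α irrational with convergent denominators q_k, K the largest integer with q_K ≤ N, γ ∈ ℝ, and n' the unique integer in [0, N] minimizing {nα - γ} over 0 ≤ n ≤ N. Then the sum over 0 ≤ n ≤ N, n ≠ n', of 1/{nα - γ} is less than 4N(log q_K + 1) + 2 q_{K+1}(log(N/q_K) + 1). -/
/-
Write `f n = {nα - γ}` and `Q = q_K`. Any two `n ≤ N` differ by less than `q_{K+1}`, so by the
best-approximation property of convergents the values `f n` are pairwise at least
`‖q_K α‖ > 1 / (2 q_{K+1})` apart; inside a block of `Q` consecutive integers they are even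
`1 / (2 q_K)` apart. If `k + 1` nonnegative reals are pairwise `δ` apart, the reciprocals of all
but the smallest sum to at most `H_k / δ`, `H_k` the harmonic number. Cutting
`[0, N]` into `⌊N / Q⌋ + 1` blocks, the points other than the block minima contribute at most
`2 Q H_Q` per block, and the block minima other than `n'` at most `H_{⌊N/Q⌋} / ‖q_K α‖`.
-/

open Finset

section Unimodular

variable {α : ℝ} {p q p' q' : ℤ}

lemma one_lt_two_mul_mul_abs_of_det (hdet : |p' * q - p * q'| = 1) (hq : 0 ≤ q)
    (hqq' : q ≤ q') (hlt : |q' * α - p'| < |q * α - p|) :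
    1 < 2 * q' * |q * α - p| := by
  have hid : (q' : ℝ) * (q * α - p) - q * (q' * α - p') = ((p' * q - p * q' : ℤ) : ℝ) := by
    push_cast; ring
  have hone : 1 ≤ (q' : ℝ) * |q * α - p| + q * |q' * α - p'| := by
    have := abs_sub ((q' : ℝ) * (q * α - p)) (q * (q' * α - p'))
    rwa [hid, ← Int.cast_abs, hdet, Int.cast_one, abs_mul, abs_mul,
      abs_of_nonneg (by exact_mod_cast hq : (0 : ℝ) ≤ q),
      abs_of_nonneg (by exact_mod_cast hq.trans hqq' : (0 : ℝ) ≤ q')] at this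
  have hqR : (0 : ℝ) ≤ q := by exact_mod_cast hq
  have hqq'R : (q : ℝ) ≤ q' := by exact_mod_cast hqq'
  nlinarith [mul_nonneg hqR (sub_nonneg.mpr hlt.le), abs_nonneg ((q' : ℝ) * α - p'),
    mul_le_mul_of_nonneg_right hqq'R (abs_nonneg ((q : ℝ) * α - p))]

lemma abs_le_abs_mul_sub_of_det (hdet : |p' * q - p * q'| = 1) (hq : 0 ≤ q) (hqq' : q ≤ q')
    (hsign : (q * α - p) * (q' * α - p') ≤ 0) {m r : ℤ} (hm : 1 ≤ m) (hmq' : m < q') :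
    |q * α - p| ≤ |m * α - r| := by
  -- Unimodularity writes `(m, r) = x (q, p) + y (q', p')`; `1 ≤ m < q'` forces `x ≠ 0` and
  -- `x y ≤ 0`, so `x (qα - p)` and `y (q'α - p')` have the same sign.
  set ε := p' * q - p * q'
  have hε : ε * ε = 1 := by rw [← abs_mul_abs_self, hdet, one_mul]
  set x := ε * (m * p' - r * q')
  set y := ε * (r * q - m * p)
  have hmxy : x * q + y * q' = m := by linear_combination m * hε
  have hrxy : x * p + y * p' = r := by linear_combination r * hε
  have hx : x ≠ 0 := by
    rintro hx
    rw [hx] at hmxy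
    rcases le_or_gt y 0 with hy | hy <;> nlinarith
  have hxy : x * y ≤ 0 := by
    by_contra! hxy
    rcases lt_or_gt_of_ne hx with hx' | hx'
    · have : y < 0 := neg_of_mul_pos_right hxy hx'.le
      nlinarith
    · have : 0 < y := pos_of_mul_pos_right hxy hx'.le
      nlinarith
  have hsplit : (m : ℝ) * α - r = x * (q * α - p) + y * (q' * α - p') := by
    rw [← hmxy, ← hrxy]; push_cast; ring
  have hx1 : (1 : ℝ) ≤ |(x : ℝ)| := by exact_mod_cast Int.one_le_abs hx
  have hsame : 0 ≤ (x * (q * α - p) : ℝ) * (y * (q' * α - p')) := by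
    have : ((x * y : ℤ) : ℝ) ≤ 0 := by exact_mod_cast hxy
    push_cast at this
    nlinarith
  calc |(q : ℝ) * α - p| ≤ |(x : ℝ)| * |q * α - p| := le_mul_of_one_le_left (abs_nonneg _) hx1
    _ = |x * (q * α - p)| := (abs_mul _ _).symm
    _ ≤ |m * α - r| := by
      rw [hsplit, ← sq_le_sq]
      nlinarith

end Unimodular

lemma one_le_and_le_succ_of_recurrence {a q : ℤ → ℤ} (ha : ∀ k, 0 ≤ k → 1 ≤ a (k + 1))
    (hqm : q (-1) = 0) (hq0 : q 0 = 1) (hq : ∀ k, 0 ≤ k → q (k + 1) = a (k + 1) * q k + q (k - 1))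
    (k : ℤ) (hk : 0 ≤ k) : 1 ≤ q k ∧ q k ≤ q (k + 1) := by
  induction k, hk using Int.leInduction with
  | base =>
    have h1 := hq 0 le_rfl
    have ha1 := ha 0 le_rfl
    norm_num [hqm, hq0] at h1 ha1 ⊢
    omega
  | succ k hk ih =>
    have h1 := hq (k + 1) (by omega)
    have ha1 := ha (k + 1) (by omega)
    rw [add_sub_cancel_right] at h1
    exact ⟨by omega, by nlinarith⟩

lemma abs_det_eq_one_of_recurrence {a p q : ℤ → ℤ} (hqm : q (-1) = 0) (hq0 : q 0 = 1)
    (hpm : p (-1) = 1) (hq : ∀ k, 0 ≤ k → q (k + 1) = a (k + 1) * q k + q (k - 1))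
    (hp : ∀ k, 0 ≤ k → p (k + 1) = a (k + 1) * p k + p (k - 1)) (k : ℤ) (hk : -1 ≤ k) :
    |p (k + 1) * q k - p k * q (k + 1)| = 1 := by
  induction k, hk using Int.leInduction with
  | base => norm_num [hqm, hq0, hpm]
  | succ k hk ih =>
    have hq1 := hq (k + 1) (by omega)
    have hp1 := hp (k + 1) (by omega)
    rw [add_sub_cancel_right] at hq1 hp1
    rw [hq1, hp1, ← abs_neg]
    convert ih using 2
    ring

-- `β k` are the complete quotients, `a k` the partial quotients and `p k / q k` the convergents
-- of `α`, with the recurrences seeded at index `-1`.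
structure IsContFracExpansion (α : ℝ) (a p q : ℤ → ℤ) (β : ℕ → ℝ) : Prop where
  β_zero : β 0 = α
  β_succ : ∀ k : ℕ, β (k + 1) = 1 / (β k - ⌊β k⌋)
  a_eq_floor : ∀ k : ℕ, a k = ⌊β k⌋
  q_neg_one : q (-1) = 0
  q_zero : q 0 = 1
  p_neg_one : p (-1) = 1
  p_zero : p 0 = a 0
  q_succ : ∀ k : ℤ, 0 ≤ k → q (k + 1) = a (k + 1) * q k + q (k - 1)
  p_succ : ∀ k : ℤ, 0 ≤ k → p (k + 1) = a (k + 1) * p k + p (k - 1)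

namespace IsContFracExpansion

variable {α : ℝ} {a p q : ℤ → ℤ} {β : ℕ → ℝ}

lemma irrational_β (h : IsContFracExpansion α a p q β) (hirr : Irrational α) (k : ℕ) :
    Irrational (β k) := by
  induction k with
  | zero => rwa [h.β_zero]
  | succ k ih =>
    rw [h.β_succ, one_div]
    exact (ih.sub_intCast _).inv

lemma fract_β_pos (h : IsContFracExpansion α a p q β) (hirr : Irrational α) (k : ℕ) :
    0 < β k - ⌊β k⌋ :=
  Int.fract_pos.mpr ((h.irrational_β hirr k).ne_int _)

lemma one_lt_β_succ (h : IsContFracExpansion α a p q β) (hirr : Irrational α) (k : ℕ) :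
    1 < β (k + 1) := by
  rw [h.β_succ]
  exact one_lt_one_div (h.fract_β_pos hirr k) (Int.fract_lt_one _)

lemma sub_a_mul_β_succ (h : IsContFracExpansion α a p q β) (hirr : Irrational α) (k : ℕ) :
    (β k - a k) * β (k + 1) = 1 := by
  rw [h.a_eq_floor, h.β_succ, mul_one_div, div_self (h.fract_β_pos hirr k).ne']

lemma one_le_a_succ (h : IsContFracExpansion α a p q β) (hirr : Irrational α) (k : ℤ)
    (hk : 0 ≤ k) : 1 ≤ a (k + 1) := by
  lift k to ℕ using hk
  have := h.a_eq_floor (k + 1)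
  push_cast at this
  rw [this, Int.le_floor]
  exact_mod_cast (h.one_lt_β_succ hirr k).le

lemma one_le_q (h : IsContFracExpansion α a p q β) (hirr : Irrational α) (k : ℕ) : 1 ≤ q k :=
  (one_le_and_le_succ_of_recurrence (h.one_le_a_succ hirr) h.q_neg_one h.q_zero h.q_succ k
    k.cast_nonneg).1

lemma q_le_q_succ (h : IsContFracExpansion α a p q β) (hirr : Irrational α) (k : ℕ) :
    q k ≤ q (k + 1) :=
  (one_le_and_le_succ_of_recurrence (h.one_le_a_succ hirr) h.q_neg_one h.q_zero h.q_succ k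
    k.cast_nonneg).2

lemma abs_det_eq_one (h : IsContFracExpansion α a p q β) (k : ℤ) (hk : -1 ≤ k) :
    |p (k + 1) * q k - p k * q (k + 1)| = 1 :=
  abs_det_eq_one_of_recurrence h.q_neg_one h.q_zero h.p_neg_one h.q_succ h.p_succ k hk

lemma err_mul_β_succ (h : IsContFracExpansion α a p q β) (hirr : Irrational α) (k : ℕ) :
    (q k * α - p k) * β (k + 1) = -(q (k - 1) * α - p (k - 1)) := by
  induction k with
  | zero =>
    have := h.sub_a_mul_β_succ hirr 0
    simp only [CharP.cast_eq_zero, zero_sub, h.q_zero, h.p_zero, h.q_neg_one, h.p_neg_one,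
      h.β_zero] at this ⊢
    push_cast
    linarith
  | succ k ih =>
    have hq1 : (q (k + 1) : ℝ) = a (k + 1) * q k + q (k - 1) := by
      exact_mod_cast h.q_succ k k.cast_nonneg
    have hp1 : (p (k + 1) : ℝ) = a (k + 1) * p k + p (k - 1) := by
      exact_mod_cast h.p_succ k k.cast_nonneg
    have hfr := h.sub_a_mul_β_succ hirr (k + 1)
    push_cast at hfr ⊢
    rw [add_sub_cancel_right, hq1, hp1]
    linear_combination β (k + 1 + 1) * ih - (q k * α - p k) * hfr

lemma err_succ_mul_β (h : IsContFracExpansion α a p q β) (hirr : Irrational α) (k : ℕ) :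
    (q (k + 1) * α - p (k + 1)) * β (k + 2) = -(q k * α - p k) := by
  have := h.err_mul_β_succ hirr (k + 1)
  push_cast at this
  rwa [add_sub_cancel_right] at this

lemma err_mul_err_succ_nonpos (h : IsContFracExpansion α a p q β) (hirr : Irrational α)
    (k : ℕ) : (q k * α - p k) * (q (k + 1) * α - p (k + 1)) ≤ 0 := by
  rw [← neg_neg ((q k : ℝ) * α - p k), ← h.err_succ_mul_β hirr k]
  nlinarith [h.one_lt_β_succ hirr (k + 1), sq_nonneg ((q (k + 1) : ℝ) * α - p (k + 1))]

lemma abs_err_succ_lt (h : IsContFracExpansion α a p q β) (hirr : Irrational α) (k : ℕ) :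
    |q (k + 1) * α - p (k + 1)| < |q k * α - p k| := by
  have hq : q (k + 1) ≠ 0 := by have := h.one_le_q hirr (k + 1); push_cast at this; omega
  have hne : (q (k + 1) : ℝ) * α - p (k + 1) ≠ 0 :=
    sub_ne_zero.mpr ((hirr.intCast_mul hq).ne_int _)
  rw [← abs_neg ((q k : ℝ) * α - p k), ← h.err_succ_mul_β hirr k, abs_mul,
    abs_of_pos (by linarith [h.one_lt_β_succ hirr (k + 1)] : 0 < β (k + 2))]
  exact lt_mul_of_one_lt_right (abs_pos.mpr hne) (h.one_lt_β_succ hirr (k + 1))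

lemma one_lt_two_mul_q_succ_mul_abs_err (h : IsContFracExpansion α a p q β)
    (hirr : Irrational α) (k : ℕ) : 1 < 2 * (q (k + 1) : ℝ) * |q k * α - p k| :=
  one_lt_two_mul_mul_abs_of_det (h.abs_det_eq_one k (by omega))
    (by linarith [h.one_le_q hirr k]) (h.q_le_q_succ hirr k) (h.abs_err_succ_lt hirr k)

lemma abs_err_le_abs_mul_sub (h : IsContFracExpansion α a p q β) (hirr : Irrational α)
    (k : ℕ) {m r : ℤ} (hm : 1 ≤ m) (hmq : m < q (k + 1)) : |q k * α - p k| ≤ |m * α - r| :=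
  abs_le_abs_mul_sub_of_det (h.abs_det_eq_one k (by omega))
    (by linarith [h.one_le_q hirr k]) (h.q_le_q_succ hirr k) (h.err_mul_err_succ_nonpos hirr k)
    hm hmq

lemma one_div_two_mul_q_le_abs_mul_sub (h : IsContFracExpansion α a p q β)
    (hirr : Irrational α) (k : ℕ) {m r : ℤ} (hm : 1 ≤ m) (hmq : m < q k) :
    1 / (2 * (q k : ℝ)) ≤ |m * α - r| := by
  cases k with
  | zero => rw [Nat.cast_zero, h.q_zero] at hmq; omega
  | succ k =>
    push_cast at hmq ⊢
    have hpos : (0 : ℝ) < 2 * q (k + 1) := by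
      have : (1 : ℝ) ≤ q (k + 1) := by exact_mod_cast h.one_le_q hirr (k + 1)
      linarith
    rw [div_le_iff₀ hpos]
    have := h.one_lt_two_mul_q_succ_mul_abs_err hirr k
    have := h.abs_err_le_abs_mul_sub hirr k (r := r) hm hmq
    nlinarith

end IsContFracExpansion

lemma le_abs_fract_sub_fract {α γ δ : ℝ} {L : ℤ}
    (h : ∀ m r : ℤ, 1 ≤ m → m < L → δ ≤ |m * α - r|) {m n : ℕ} (hmn : m ≠ n)
    (hL : |(n : ℤ) - m| < L) :
    δ ≤ |Int.fract (m * α - γ) - Int.fract (n * α - γ)| := by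
  have key : ∀ m n : ℕ, m < n → (n : ℤ) - m < L →
      δ ≤ |Int.fract (n * α - γ) - Int.fract (m * α - γ)| := fun m n hlt hL => by
    have := h (n - m) (⌊n * α - γ⌋ - ⌊m * α - γ⌋) (by omega) hL
    simp only [Int.fract]
    push_cast at this ⊢
    ring_nf at this ⊢
    exact this
  rcases hmn.lt_or_gt with hlt | hlt
  · rw [abs_sub_comm]
    exact key m n hlt (by rwa [abs_of_pos (by omega)] at hL)
  · exact key n m hlt (by rwa [abs_of_neg (by omega), neg_sub] at hL)

lemma add_le_of_le_of_le_abs_sub {a b δ : ℝ} (hab : a ≤ b) (h : δ ≤ |b - a|) : a + δ ≤ b := by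
  rw [abs_of_nonneg (sub_nonneg.mpr hab)] at h
  linarith

lemma sum_one_div_le_of_separated {ι : Type*} [DecidableEq ι] (t : Finset ι) (g : ι → ℝ)
    {c δ : ℝ} (hc : 0 ≤ c) (hδ : 0 < δ) (hlow : ∀ n ∈ t, c + δ ≤ g n)
    (hsep : ∀ m ∈ t, ∀ n ∈ t, m ≠ n → δ ≤ |g m - g n|) :
    ∑ n ∈ t, 1 / g n ≤ ∑ j ∈ range #t, 1 / (c + (j + 1) * δ) := by
  induction h : #t generalizing t c with
  | zero => simp_all
  | succ k ih =>
    obtain ⟨n₁, hn₁, hmin⟩ := t.exists_min_image g (card_pos.mp (by omega))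
    have hrest : ∀ n ∈ t.erase n₁, g n₁ + δ ≤ g n := fun n hn =>
      add_le_of_le_of_le_abs_sub (hmin n (mem_of_mem_erase hn))
        (hsep n (mem_of_mem_erase hn) n₁ hn₁ (ne_of_mem_erase hn))
    have hc₁ : 0 ≤ g n₁ := by linarith [hlow n₁ hn₁]
    have hIH := ih (t.erase n₁) hc₁ hrest
      (fun m hm n hn => hsep m (mem_of_mem_erase hm) n (mem_of_mem_erase hn))
      (by rw [card_erase_of_mem hn₁]; omega)
    have hg₁ : c + δ ≤ g n₁ := hlow n₁ hn₁
    rw [← sum_erase_add t _ hn₁, sum_range_succ']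
    refine add_le_add (hIH.trans (sum_le_sum fun j _ => ?_)) ?_
    · exact one_div_le_one_div_of_le (by positivity) (by push_cast; linarith)
    · exact one_div_le_one_div_of_le (by positivity) (by simpa using hg₁)

lemma sum_one_div_le_harmonic_div {ι : Type*} [DecidableEq ι] {t : Finset ι} {g : ι → ℝ}
    {δ : ℝ} {L : ℕ} (hδ : 0 < δ) (hlow : ∀ n ∈ t, δ ≤ g n)
    (hsep : ∀ m ∈ t, ∀ n ∈ t, m ≠ n → δ ≤ |g m - g n|) (hcard : #t ≤ L) :
    ∑ n ∈ t, 1 / g n ≤ harmonic L / δ := by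
  have hsum : ∑ j ∈ range #t, 1 / (0 + (j + 1) * δ) ≤ ∑ j ∈ range L, 1 / (0 + (j + 1) * δ) :=
    sum_le_sum_of_subset_of_nonneg (range_subset_range.mpr hcard) fun _ _ _ => by positivity
  refine (sum_one_div_le_of_separated t g le_rfl hδ (by simpa using hlow) hsep).trans
    (hsum.trans_eq ?_)
  simp only [harmonic, Rat.cast_sum, sum_div, zero_add]
  refine sum_congr rfl fun j _ => ?_
  push_cast
  field_simp

lemma sum_erase_one_div_le_of_blocks {ι κ : Type*} [DecidableEq ι] [DecidableEq κ]
    {s : Finset ι} {g : ι → ℝ} (π : ι → κ) {n₀ : ι} {δ₁ δ₂ : ℝ} {L : ℕ}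
    (hn₀ : n₀ ∈ s) (h0 : 0 ≤ g n₀) (hmin : ∀ n ∈ s, g n₀ ≤ g n) (hδ₁ : 0 < δ₁) (hδ₂ : 0 < δ₂)
    (hsep₁ : ∀ m ∈ s, ∀ n ∈ s, π m = π n → m ≠ n → δ₁ ≤ |g m - g n|)
    (hsep₂ : ∀ m ∈ s, ∀ n ∈ s, m ≠ n → δ₂ ≤ |g m - g n|)
    (hblock : ∀ i, #{n ∈ s | π n = i} ≤ L) :
    ∑ n ∈ s.erase n₀, 1 / g n ≤
      #(s.image π) * (harmonic L / δ₁) + harmonic (#(s.image π) - 1) / δ₂ := by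
  set T := {n ∈ s | ∀ m ∈ s, π m = π n → g n ≤ g m}
  have hTs : T ⊆ s := filter_subset _ _
  have hn₀T : n₀ ∈ T := mem_filter.mpr ⟨hn₀, fun m hm _ => hmin m hm⟩
  have hsplit : ∑ n ∈ s.erase n₀, 1 / g n = ∑ n ∈ s \ T, 1 / g n + ∑ n ∈ T.erase n₀, 1 / g n := by
    have := sum_erase_add s (fun n => 1 / g n) hn₀
    have := sum_sdiff hTs (f := fun n => 1 / g n)
    have := sum_erase_add T (fun n => 1 / g n) hn₀T
    linarith
  have houter : ∑ n ∈ s \ T, 1 / g n ≤ #(s.image π) * (harmonic L / δ₁) := by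
    rw [← sum_fiberwise_of_maps_to (g := π) (t := s.image π)
      fun n hn => mem_image_of_mem π (mem_sdiff.mp hn).1, ← nsmul_eq_mul]
    refine sum_le_card_nsmul _ _ _ fun i _ => sum_one_div_le_harmonic_div hδ₁ ?_ ?_ ?_
    · intro n hn
      obtain ⟨hns, hnT⟩ := mem_sdiff.mp (mem_filter.mp hn).1
      obtain ⟨m, hms, hπ, hlt⟩ : ∃ m ∈ s, π m = π n ∧ g m < g n := by
        simpa [T, hns] using hnT
      have := add_le_of_le_of_le_abs_sub hlt.le
        (hsep₁ n hns m hms hπ.symm (by rintro rfl; exact lt_irrefl _ hlt))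
      linarith [hmin m hms]
    · intro m hm n hn
      obtain ⟨hm', rfl⟩ := mem_filter.mp hm
      obtain ⟨hn', hπ⟩ := mem_filter.mp hn
      exact hsep₁ m (mem_sdiff.mp hm').1 n (mem_sdiff.mp hn').1 hπ.symm
    · exact (card_le_card (filter_subset_filter _ sdiff_subset)).trans (hblock i)
  have hinner : ∑ n ∈ T.erase n₀, 1 / g n ≤ harmonic (#(s.image π) - 1) / δ₂ := by
    refine sum_one_div_le_harmonic_div hδ₂ (fun n hn => ?_)
      (fun m hm n hn => hsep₂ m (hTs (mem_of_mem_erase hm)) n (hTs (mem_of_mem_erase hn))) ?_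
    · have hns := hTs (mem_of_mem_erase hn)
      have := add_le_of_le_of_le_abs_sub (hmin n hns) (hsep₂ n hns n₀ hn₀ (ne_of_mem_erase hn))
      linarith
    · have hinj : Set.InjOn π T := fun m hm n hn hπ => by
        obtain ⟨hms, hmT⟩ := mem_filter.mp hm
        obtain ⟨hns, hnT⟩ := mem_filter.mp hn
        by_contra hne
        have := hsep₁ m hms n hns hπ hne
        rw [le_antisymm (hmT n hns hπ.symm) (hnT m hms hπ), sub_self, abs_zero] at this
        linarith
      have := card_le_card_of_injOn π (fun n hn => mem_image_of_mem π (hTs hn)) hinj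
      rw [card_erase_of_mem hn₀T]
      omega
  linarith

lemma abs_sub_lt_of_div_eq {m n Q : ℕ} (hQ : 0 < Q) (h : m / Q = n / Q) :
    |(n : ℤ) - m| < Q := by
  have := Nat.div_add_mod m Q
  have := Nat.div_add_mod n Q
  have := Nat.mod_lt m hQ
  have := Nat.mod_lt n hQ
  rw [h] at *
  rw [abs_lt]
  omega

lemma card_filter_div_eq_le {N Q : ℕ} (hQ : 0 < Q) (i : ℕ) : #{n ∈ range N | n / Q = i} ≤ Q :=
  calc #{n ∈ range N | n / Q = i} ≤ #(Icc (i * Q) (i * Q + Q - 1)) :=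
        card_le_card fun n hn => by
          rw [mem_filter, Nat.div_eq_iff hQ] at hn
          exact mem_Icc.mpr hn.2
    _ = Q := by rw [Nat.card_Icc]; omega

lemma image_div_range {N Q : ℕ} (hQ : 0 < Q) :
    (range (N + 1)).image (· / Q) = range (N / Q + 1) := by
  ext i
  simp only [mem_image, mem_range, Nat.lt_succ_iff]
  constructor
  · rintro ⟨n, hn, rfl⟩
    exact Nat.div_le_div_right hn
  · intro hi
    exact ⟨i * Q, (Nat.le_div_iff_mul_le hQ).mp hi, Nat.mul_div_cancel i hQ⟩

lemma natCast_div_add_one_mul_harmonic_le {N Q : ℕ} (hQ : 0 < Q) (hQN : Q ≤ N) :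
    ((N / Q + 1 : ℕ) : ℝ) * (harmonic Q / (1 / (2 * Q))) ≤ 4 * N * (Real.log Q + 1) := by
  have hcount : ((N / Q + 1 : ℕ) : ℝ) * Q ≤ 2 * N := by
    have := Nat.div_mul_le_self N Q
    exact_mod_cast (by nlinarith : (N / Q + 1) * Q ≤ 2 * N)
  have hH := harmonic_le_one_add_log Q
  have hH0 : (0 : ℝ) ≤ harmonic Q := by exact_mod_cast (harmonic_pos hQ.ne').le
  calc ((N / Q + 1 : ℕ) : ℝ) * (harmonic Q / (1 / (2 * Q)))
      = 2 * (((N / Q + 1 : ℕ) : ℝ) * Q) * harmonic Q := by field_simp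
    _ ≤ 2 * (2 * N) * (1 + Real.log Q) := by gcongr
    _ = 4 * N * (Real.log Q + 1) := by ring

lemma harmonic_div_lt {N Q : ℕ} {E q' : ℝ} (hQ : 0 < Q) (hQN : Q ≤ N) (hE : 0 < E)
    (hq'E : 1 < 2 * q' * E) : harmonic (N / Q) / E < 2 * q' * (Real.log (N / Q : ℝ) + 1) := by
  have hM : N / Q ≠ 0 := (Nat.div_pos hQN hQ).ne'
  have hH0 : (0 : ℝ) < harmonic (N / Q) := by exact_mod_cast harmonic_pos hM
  have hH : (harmonic (N / Q) : ℝ) ≤ 1 + Real.log (N / Q : ℝ) :=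
    (harmonic_le_one_add_log _).trans <| by
      gcongr
      exact Nat.cast_div_le
  rw [div_lt_iff₀ hE]
  nlinarith

theorem stmt_14_general
    (α : ℝ) (hirr : Irrational α)
    (a p q : ℤ → ℤ) (β : ℕ → ℝ)
    (hβ0 : β 0 = α)
    (hβ : ∀ k : ℕ, β (k + 1) = 1 / (β k - ⌊β k⌋))
    (ha : ∀ k : ℕ, a (k : ℤ) = ⌊β k⌋)
    (hqm : q (-1) = 0) (hq0 : q 0 = 1)
    (hpm : p (-1) = 1) (hp0 : p 0 = a 0)
    (hqrec : ∀ k : ℤ, 0 ≤ k → q (k + 1) = a (k + 1) * q k + q (k - 1))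
    (hprec : ∀ k : ℤ, 0 ≤ k → p (k + 1) = a (k + 1) * p k + p (k - 1))
    (N : ℕ) (K : ℕ)
    (hK : q (K : ℤ) ≤ (N : ℤ)) (hKmax : ∀ j : ℕ, q (j : ℤ) ≤ (N : ℤ) → j ≤ K)
    (γ : ℝ) (n' : ℕ) (hn'le : n' ≤ N)
    (hmin : ∀ m : ℕ, m ≤ N → Int.fract ((n' : ℝ) * α - γ) ≤ Int.fract ((m : ℝ) * α - γ)) :
    ∑ n ∈ (Finset.range (N + 1)).erase n', 1 / Int.fract ((n : ℝ) * α - γ) <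
      4 * (N : ℝ) * (Real.log (q (K : ℤ) : ℝ) + 1) +
        2 * (q ((K : ℤ) + 1) : ℝ) * (Real.log ((N : ℝ) / (q (K : ℤ) : ℝ)) + 1) := by
  have hcf : IsContFracExpansion α a p q β := ⟨hβ0, hβ, ha, hqm, hq0, hpm, hp0, hqrec, hprec⟩
  have hqK := hcf.one_le_q hirr K
  obtain ⟨Q, hQ⟩ := Int.eq_ofNat_of_zero_le (by omega : 0 ≤ q K)
  have hQpos : 0 < Q := by omega
  have hNq : (N : ℤ) < q (K + 1) := by
    by_contra! hle
    have := hKmax (K + 1) (by push_cast; exact hle)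
    omega
  have hblock (m r : ℤ) (hm : 1 ≤ m) (hmQ : m < Q) : 1 / (2 * (Q : ℝ)) ≤ |m * α - r| := by
    have := hcf.one_div_two_mul_q_le_abs_mul_sub hirr K hm (r := r) (hQ ▸ hmQ)
    rwa [hQ, Int.cast_natCast] at this
  have hEpos := (abs_nonneg _).trans_lt (hcf.abs_err_succ_lt hirr K)
  have hbound := sum_erase_one_div_le_of_blocks (s := range (N + 1)) (· / Q) (L := Q)
    (mem_range.mpr (by omega)) (Int.fract_nonneg _)
    (fun n hn => hmin n (Nat.lt_succ_iff.mp (mem_range.mp hn))) (by positivity) hEpos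
    (fun m _ n _ hπ hmn => le_abs_fract_sub_fract hblock hmn (abs_sub_lt_of_div_eq hQpos hπ))
    (fun m hm n hn hmn => le_abs_fract_sub_fract (fun _ _ => hcf.abs_err_le_abs_mul_sub hirr K)
      hmn (by rw [mem_range] at hm hn; rw [abs_lt]; omega))
    (card_filter_div_eq_le hQpos)
  rw [image_div_range hQpos, card_range, Nat.add_sub_cancel] at hbound
  rw [hQ, Int.cast_natCast]
  refine hbound.trans_lt (add_lt_add_of_le_of_lt ?_ ?_)
  · exact natCast_div_add_one_mul_harmonic_le hQpos (by omega)
  · exact harmonic_div_lt hQpos (by omega) hEpos (hcf.one_lt_two_mul_q_succ_mul_abs_err hirr K)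

/-- Main theorem: with K the largest integer such that q_K ≤ N and n' the minimizer of
{nα - γ} over 0 ≤ n ≤ N, one has
∑_{0 ≤ n ≤ N, n ≠ n'} 1/{nα - γ} < 4N(log q_K + 1) + 2 q_{K+1}(log(N/q_K) + 1). -/
theorem stmt_14
    (α : ℝ) (hirr : Irrational α)
    (a p q : ℤ → ℤ) (β : ℕ → ℝ)
    (hβ0 : β 0 = α)
    (hβ : ∀ k : ℕ, β (k + 1) = 1 / (β k - ⌊β k⌋))
    (ha : ∀ k : ℕ, a (k : ℤ) = ⌊β k⌋)
    (hqm : q (-1) = 0) (hq0 : q 0 = 1)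
    (hpm : p (-1) = 1) (hp0 : p 0 = a 0)
    (hqrec : ∀ k : ℤ, 0 ≤ k → q (k + 1) = a (k + 1) * q k + q (k - 1))
    (hprec : ∀ k : ℤ, 0 ≤ k → p (k + 1) = a (k + 1) * p k + p (k - 1))
    (D : ℤ → ℝ) (hD : ∀ k : ℤ, D k = (q k : ℝ) * α - (p k : ℝ))
    (N : ℕ) (hN1 : 1 ≤ N) (K : ℕ)
    (hK : q (K : ℤ) ≤ (N : ℤ)) (hKmax : ∀ j : ℕ, q (j : ℤ) ≤ (N : ℤ) → j ≤ K)
    (γ : ℝ) (n' : ℕ) (hn'le : n' ≤ N)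
    (hmin : ∀ m : ℕ, m ≤ N → Int.fract ((n' : ℝ) * α - γ) ≤ Int.fract ((m : ℝ) * α - γ)) :
    ∑ n ∈ (Finset.range (N + 1)).erase n', 1 / Int.fract ((n : ℝ) * α - γ) <
      4 * (N : ℝ) * (Real.log (q (K : ℤ) : ℝ) + 1) +
        2 * (q ((K : ℤ) + 1) : ℝ) * (Real.log ((N : ℝ) / (q (K : ℤ) : ℝ)) + 1) :=
  stmt_14_general α hirr a p q β hβ0 hβ ha hqm hq0 hpm hp0 hqrec hprec N K hK hKmax γ n' hn'le hmin
end
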